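/- Let S be an RN module over ℝ with base (Ω, F, P) and let x, y ∈ S be such that P(A_{xy}) > 0 and x and y are not L⁰-independent on A_{xy}. Then there exist F ∈ F̃ with F ⊂ A_{xy} and P(F) > 0 and ξ, η ∈ L⁰(F,ℝ) with F ⊂ [ξ ≠ 0] ∩ [η ≠ 0] such that ξI_F x + ηI_F y = θ and such that, whenever P(A_{xy}\F) > 0, x and y are L⁰-independent on A_{xy}\F; moreover F is the unique element of F̃ with these properties. -/

import Mathlib

open MeasureTheory Filter Set

noncomputable section

namespace RNM

variable {Ω : Type*} [MeasurableSpace Ω]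

/-- `L⁰(F, ℝ)`: equivalence classes of real random variables mod a.e. equality. -/
abbrev L0 (μ : Measure Ω) : Type _ := Ω →ₘ[μ] ℝ

open Classical in
/-- The equivalence class of the indicator function of a (measurable) set. -/
noncomputable def ind (μ : Measure Ω) (A : Set Ω) : L0 μ :=
  if h : MeasurableSet A then
    AEEqFun.mk (A.indicator fun _ => (1 : ℝ)) (aestronglyMeasurable_const.indicator h)
  else 0

/-- The constant function, as an element of `L⁰`. -/
noncomputable def cst (μ : Measure Ω) (r : ℝ) : L0 μ := AEEqFun.const Ω r

/-- `A ⊂ B` modulo null sets. -/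
def aeSub (μ : Measure Ω) (A B : Set Ω) : Prop := μ (A \ B) = 0

/-- `A = B` modulo null sets. -/
def aeEqS (μ : Measure Ω) (A B : Set Ω) : Prop := μ ((A \ B) ∪ (B \ A)) = 0

variable {μ : Measure Ω} {S : Type*} [AddCommGroup S]

/-- The axioms of a random normed module over ℝ with base `(Ω, F, μ)`: `S` is a left module
over the algebra `L⁰(F,ℝ)` (with module multiplication `sm`) and `nrm` is an `L⁰`-norm. -/
structure IsRNModule (μ : Measure Ω) (sm : L0 μ → S → S) (nrm : S → L0 μ) : Prop where
  smul_add : ∀ ξ x y, sm ξ (x + y) = sm ξ x + sm ξ y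
  add_smul : ∀ ξ η x, sm (ξ + η) x = sm ξ x + sm η x
  mul_smul : ∀ ξ η x, sm (ξ * η) x = sm ξ (sm η x)
  one_smul : ∀ x, sm 1 x = x
  nrm_nonneg : ∀ x, 0 ≤ nrm x
  nrm_smul : ∀ ξ x, nrm (sm ξ x) = |ξ| * nrm x
  nrm_add : ∀ x y, nrm (x + y) ≤ nrm x + nrm y
  nrm_eq_zero : ∀ x, nrm x = 0 → x = 0

/-- `x` and `y` are `L⁰`-independent on `F`. -/
def Indep (sm : L0 μ → S → S) (x y : S) (F : Set Ω) : Prop :=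
  ∀ ξ η : L0 μ, sm (ξ * ind μ F) x + sm (η * ind μ F) y = 0 →
    ξ * ind μ F = 0 ∧ η * ind μ F = 0

/-- `Rank_D(S) ≥ 2`. -/
def RankGe2 (sm : L0 μ → S → S) (D : Set Ω) : Prop := ∃ x y : S, Indep sm x y D

/-- `A_x = [‖x‖ > 0]`. -/
def Aset (nrm : S → L0 μ) (x : S) : Set Ω := {ω | 0 < (nrm x) ω}

/-- `A_{xy} = A_x ∩ A_y`. -/
def Axy (nrm : S → L0 μ) (x y : S) : Set Ω := Aset nrm x ∩ Aset nrm y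

/-- `B_{xy} = A_{xy} ∩ A_{x-y}`. -/
def Bxy (nrm : S → L0 μ) (x y : S) : Set Ω := Axy nrm x y ∩ Aset nrm (x - y)

/-- `H` is (a representative of) the support `H(S) = [⋁{‖x‖ : x ∈ S} > 0]`. -/
def IsSupport (nrm : S → L0 μ) (H : Set Ω) : Prop :=
  MeasurableSet H ∧ (∀ x : S, aeSub μ (Aset nrm x) H) ∧
    ∀ B : Set Ω, MeasurableSet B → aeSub μ B H → 0 < μ B →
      ∃ x : S, 0 < μ (B ∩ Aset nrm x)

/-- A sequence in `S` is Cauchy for the topology of convergence in probability. -/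
def CauchyInProb (μ : Measure Ω) (nrm : S → L0 μ) (u : ℕ → S) : Prop :=
  ∀ ε : ℝ, 0 < ε →
    Tendsto (fun p : ℕ × ℕ => μ {ω | ε ≤ |(nrm (u p.1 - u p.2)) ω|}) atTop (nhds 0)

/-- `u n → x` in probability (i.e. `‖u n - x‖ → 0` in probability). -/
def TendstoInProb (μ : Measure Ω) (nrm : S → L0 μ) (u : ℕ → S) (x : S) : Prop :=
  ∀ ε : ℝ, 0 < ε →
    Tendsto (fun n => μ {ω | ε ≤ |(nrm (u n - x)) ω|}) atTop (nhds 0)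

/-- Completeness of a random normed module. -/
def CompleteRN (μ : Measure Ω) (nrm : S → L0 μ) : Prop :=
  ∀ u : ℕ → S, CauchyInProb μ nrm u → ∃ x : S, TendstoInProb μ nrm u x

/-- The random unit sphere `S(1)`. -/
def sphere (nrm : S → L0 μ) : Set S :=
  {x | ∃ A : Set Ω, MeasurableSet A ∧ 0 < μ A ∧ nrm x = ind μ A}

/-- The random closed unit ball `U(1)`. -/
def ball (nrm : S → L0 μ) : Set S := {x | nrm x ≤ 1}

/-- `ε` is an admissible random convexity parameter on `D`: `ε ≥ 0` and `0 < ε ≤ 2` on `D`. -/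
def Admissible (μ : Measure Ω) (D : Set Ω) (ε : L0 μ) : Prop :=
  0 ≤ ε ∧ ∀ᵐ ω ∂μ, ω ∈ D → 0 < ε ω ∧ ε ω ≤ 2

/-- midpoint `(x+y)/2`. -/
def mid (μ : Measure Ω) (sm : L0 μ → S → S) (x y : S) : S := sm (cst μ (1/2)) (x + y)

/-- The set whose infimum (in the a.s. order of `L⁰`) is the modulus of random
convexity `δ_D(ε)`. -/
def modSet (μ : Measure Ω) (sm : L0 μ → S → S) (nrm : S → L0 μ) (D : Set Ω) (ε : L0 μ) :
    Set (L0 μ) :=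
  {z | ∃ x ∈ sphere nrm, ∃ y ∈ sphere nrm, aeSub μ D (Bxy nrm x y) ∧
    ε * ind μ D ≤ ind μ D * nrm (x - y) ∧
    z = ind μ D - ind μ D * nrm (mid μ sm x y)}

/-- `S` is random uniformly convex: `δ_{H(S)}(ε) > 0` on `H(S)` for every admissible `ε`. -/
def RandomUniformlyConvex (μ : Measure Ω) (sm : L0 μ → S → S) (nrm : S → L0 μ)
    (H : Set Ω) : Prop :=
  ∀ ε : L0 μ, Admissible μ H ε → ∀ d : L0 μ, IsGLB (modSet μ sm nrm H ε) d →
    ∀ᵐ ω ∂μ, ω ∈ H → 0 < d ω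

/-- `G` is (a representative of) `G(S)`. -/
def IsGSet (μ : Measure Ω) (sm : L0 μ → S → S) (H G : Set Ω) : Prop :=
  MeasurableSet G ∧ aeSub μ G H ∧ 0 < μ G ∧ RankGe2 sm G ∧
    ∀ D : Set Ω, MeasurableSet D → aeSub μ D (H \ G) → 0 < μ D → ¬ RankGe2 sm D


/-- The properties demanded of `F` in Proposition 2.1(1): `F ⊂ A_{xy}`, `P(F) > 0`, there
are `ξ, η` nonzero on `F` with `ξ I_F x + η I_F y = θ`, and `x, y` are `L⁰`-independent
on `A_{xy} \ F` whenever it has positive probability. -/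
def SplitProp (μ : Measure Ω) (sm : L0 μ → S → S) (nrm : S → L0 μ) (x y : S)
    (F : Set Ω) : Prop :=
  MeasurableSet F ∧ aeSub μ F (Axy nrm x y) ∧ 0 < μ F ∧
    (∃ ξ η : L0 μ, aeSub μ F {ω | ξ ω ≠ 0} ∧ aeSub μ F {ω | η ω ≠ 0} ∧
      sm (ξ * ind μ F) x + sm (η * ind μ F) y = 0) ∧
    (0 < μ (Axy nrm x y \ F) → Indep sm x y (Axy nrm x y \ F))

/-!
Call a measurable `F ⊆ A_{xy}` a dependence set if `ξ I_F x + η I_F y = θ` for some `ξ, η` that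
are nonzero on `F`. Any relation `ξ I_D x + η I_D y = θ` with `D ⊆ A_{xy}` restricts to the
dependence set `D ∩ [ξ ≠ 0]`: there `η ≠ 0` as well, because `|ξ| ‖x‖ = |η| ‖y‖` and both norms
are positive on `A_{xy}`. Dependence sets are closed under countable unions: the coefficients
can be glued along the disjointed sets, and the glued combination vanishes because its norm
vanishes on every piece. As `P` is finite, a dependence set of maximal measure contains every
other one up to a null set; this is the `F` sought. It is not null because `x, y` are dependent
on `A_{xy}`, and `x, y` are independent on `A_{xy} \ F` since a relation there would restrict to
a dependence set outside `F`. For another such `F'`, `F' ⊆ F` by maximality, while `F \ F'` is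
a dependence set inside `A_{xy} \ F'`, where `x, y` are independent, so it is null.
-/

lemma aeSub_iff {A B : Set Ω} : aeSub μ A B ↔ ∀ᵐ ω ∂μ, ω ∈ A → ω ∈ B := by
  rw [aeSub, ← ae_le_set]
  rfl

lemma aeSub.measure_le {A B : Set Ω} (h : aeSub μ A B) : μ A ≤ μ B :=
  measure_mono_ae (ae_le_set.2 h)

lemma aeSub_of_subset {A B : Set Ω} (h : A ⊆ B) : aeSub μ A B := by
  rw [aeSub, sdiff_eq_empty.2 h, measure_empty]

lemma aeSub_iUnion {ι : Type*} [Countable ι] {E : ι → Set Ω} {B : Set Ω}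
    (h : ∀ i, aeSub μ (E i) B) : aeSub μ (⋃ i, E i) B := by
  rw [aeSub, iUnion_sdiff]
  exact measure_iUnion_null h

theorem exists_aeSub_greatest_of_iUnion_mem [IsFiniteMeasure μ] {C : Set (Set Ω)}
    (hC : C.Nonempty) (hmeas : ∀ s ∈ C, MeasurableSet s)
    (hU : ∀ s : ℕ → Set Ω, (∀ n, s n ∈ C) → ⋃ n, s n ∈ C) :
    ∃ s ∈ C, ∀ t ∈ C, aeSub μ t s := by
  obtain ⟨u, -, hu_lim, hu_mem⟩ := exists_seq_tendsto_sSup (hC.image μ) (OrderTop.bddAbove _)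
  choose s hs hμs using hu_mem
  have hS : ⋃ n, s n ∈ C := hU s hs
  have hsup : μ (⋃ n, s n) = sSup (μ '' C) :=
    le_antisymm (le_sSup (mem_image_of_mem μ hS))
      (le_of_tendsto' hu_lim fun n => hμs n ▸ measure_mono (subset_iUnion s n))
  refine ⟨_, hS, fun t ht => ?_⟩
  have hSt : (⋃ n, s n) ∪ t ∈ C := by
    have := hU (fun | 0 => t | n + 1 => s n) (fun | 0 => ht | n + 1 => hs n)
    rw [← union_iUnion_nat_succ, union_comm] at this
    exact this
  have hle : μ (⋃ n, s n) + μ (t \ ⋃ n, s n) ≤ μ (⋃ n, s n) + 0 := by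
    rw [measure_add_sdiff (hmeas _ hS).nullMeasurableSet, add_zero, hsup]
    exact le_sSup (mem_image_of_mem μ hSt)
  exact nonpos_iff_eq_zero.1 (ENNReal.le_of_add_le_add_left (measure_ne_top _ _) hle)

lemma measurableSet_ne_zero (ξ : L0 μ) : MeasurableSet {ω | ξ ω ≠ 0} :=
  (measurableSet_singleton 0).compl.preimage ξ.measurable

lemma measurableSet_Axy {T : Type*} {nrm : T → L0 μ} (x y : T) :
    MeasurableSet (Axy nrm x y) :=
  (measurableSet_lt measurable_const (nrm x).measurable).inter
    (measurableSet_lt measurable_const (nrm y).measurable)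

lemma coeFn_ind {A : Set Ω} (hA : MeasurableSet A) :
    ⇑(ind μ A) =ᵐ[μ] A.indicator fun _ => (1 : ℝ) := by
  rw [ind, dif_pos hA]
  exact AEEqFun.coeFn_mk _ _

lemma coeFn_mul_ind (ξ : L0 μ) {A : Set Ω} (hA : MeasurableSet A) :
    ⇑(ξ * ind μ A) =ᵐ[μ] A.indicator ξ := by
  filter_upwards [AEEqFun.coeFn_mul ξ (ind μ A), coeFn_ind hA] with ω h1 h2
  by_cases hω : ω ∈ A <;> simp [h1, h2, hω]

lemma ind_mul_ind {A B : Set Ω} (hA : MeasurableSet A) (hB : MeasurableSet B) :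
    ind μ A * ind μ B = ind μ (A ∩ B) := by
  refine AEEqFun.ext ?_
  filter_upwards [coeFn_mul_ind (ind μ A) hB, coeFn_ind hA, coeFn_ind (hA.inter hB)]
    with ω h1 h2 h3
  by_cases hωA : ω ∈ A <;> by_cases hωB : ω ∈ B <;> simp [h1, h2, h3, hωA, hωB]

lemma ind_congr {A B : Set Ω} (h : A =ᵐ[μ] B) (hA : MeasurableSet A) (hB : MeasurableSet B) :
    ind μ A = ind μ B := by
  rw [ind, ind, dif_pos hA, dif_pos hB]
  exact AEEqFun.mk_eq_mk.2 (indicator_ae_eq_of_ae_eq_set h)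

lemma mul_ind_eq_mul_ind_iff {ξ ζ : L0 μ} {A : Set Ω} (hA : MeasurableSet A) :
    ξ * ind μ A = ζ * ind μ A ↔ ∀ᵐ ω ∂μ, ω ∈ A → ξ ω = ζ ω := by
  rw [AEEqFun.ext_iff]
  refine eventually_congr ?_
  filter_upwards [coeFn_mul_ind ξ hA, coeFn_mul_ind ζ hA] with ω h1 h2
  by_cases hω : ω ∈ A <;> simp [h1, h2, hω]

lemma mul_ind_eq_zero_iff {ξ : L0 μ} {A : Set Ω} (hA : MeasurableSet A) :
    ξ * ind μ A = 0 ↔ ∀ᵐ ω ∂μ, ω ∈ A → ξ ω = 0 := by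
  rw [AEEqFun.ext_iff]
  refine eventually_congr ?_
  filter_upwards [coeFn_mul_ind ξ hA, AEEqFun.coeFn_zero (μ := μ) (β := ℝ)] with ω h1 h2
  by_cases hω : ω ∈ A <;> simp [h1, h2, hω]

theorem exists_ae_eq_on_of_pairwise_disjoint {ι : Type*} [Countable ι] {E : ι → Set Ω}
    (hE : ∀ i, MeasurableSet (E i)) (hd : Pairwise (Function.onFun Disjoint E)) (ξ : ι → L0 μ) :
    ∃ ζ : L0 μ, ∀ i, ∀ᵐ ω ∂μ, ω ∈ E i → ζ ω = ξ i ω := by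
  cases isEmpty_or_nonempty ι
  · exact ⟨0, isEmptyElim⟩
  obtain ⟨f, hf, hfξ⟩ := exists_measurable_piecewise E hE (fun i => ξ i) (fun i => (ξ i).measurable)
    fun i j hij ω hω => ((hd hij).ne_of_mem hω.1 hω.2 rfl).elim
  refine ⟨AEEqFun.mk f hf.aestronglyMeasurable, fun i => ?_⟩
  filter_upwards [AEEqFun.coeFn_mk f hf.aestronglyMeasurable] with ω h hω
  rw [h, hfξ i hω]

variable {sm : L0 μ → S → S} {nrm : S → L0 μ}

namespace IsRNModule

lemma sm_zero_left (hRN : IsRNModule μ sm nrm) (x : S) : sm 0 x = 0 := by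
  have h := hRN.add_smul 0 0 x
  rwa [add_zero, left_eq_add] at h

lemma sm_zero_right (hRN : IsRNModule μ sm nrm) (ξ : L0 μ) : sm ξ 0 = 0 := by
  have h := hRN.smul_add ξ 0 0
  rwa [add_zero, left_eq_add] at h

lemma sm_neg (hRN : IsRNModule μ sm nrm) (ξ : L0 μ) (x : S) : sm (-ξ) x = -sm ξ x := by
  refine eq_neg_of_add_eq_zero_left ?_
  rw [← hRN.add_smul, neg_add_cancel, hRN.sm_zero_left]

lemma ae_nrm_sm (hRN : IsRNModule μ sm nrm) (ξ : L0 μ) (x : S) :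
    ∀ᵐ ω ∂μ, nrm (sm ξ x) ω = |ξ ω| * nrm x ω := by
  filter_upwards [AEEqFun.coeFn_mul |ξ| (nrm x), AEEqFun.coeFn_abs ξ] with ω h1 h2
  rw [hRN.nrm_smul, h1, Pi.mul_apply, h2]

lemma nrm_zero (hRN : IsRNModule μ sm nrm) : nrm 0 = 0 := by
  refine AEEqFun.ext ?_
  filter_upwards [hRN.ae_nrm_sm 0 0, AEEqFun.coeFn_zero (μ := μ) (β := ℝ)] with ω h1 h2
  rw [hRN.sm_zero_left] at h1
  rw [h1, h2, Pi.zero_apply, abs_zero, zero_mul]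

lemma ae_abs_mul_nrm_eq (hRN : IsRNModule μ sm nrm) {a b : L0 μ} {x y : S}
    (h : sm a x + sm b y = 0) : ∀ᵐ ω ∂μ, |a ω| * nrm x ω = |b ω| * nrm y ω := by
  have hab : sm a x = sm (-b) y := by rw [hRN.sm_neg]; exact eq_neg_of_add_eq_zero_left h
  filter_upwards [hRN.ae_nrm_sm a x, hRN.ae_nrm_sm (-b) y, AEEqFun.coeFn_neg b] with ω h1 h2 h3
  rw [← h1, hab, h2, h3, Pi.neg_apply, abs_neg]

lemma ae_nrm_eq_zero_of_sm_ind_eq_zero (hRN : IsRNModule μ sm nrm) {A : Set Ω}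
    (hA : MeasurableSet A) {z : S} (h : sm (ind μ A) z = 0) : ∀ᵐ ω ∂μ, ω ∈ A → nrm z ω = 0 := by
  filter_upwards [hRN.ae_nrm_sm (ind μ A) z, coeFn_ind hA,
    AEEqFun.coeFn_zero (μ := μ) (β := ℝ)] with ω h1 h2 h3 hω
  rwa [h, hRN.nrm_zero, h3, h2, indicator_of_mem hω, abs_one, one_mul, Pi.zero_apply,
    eq_comm] at h1

lemma eq_zero_of_sm_ind_eq_zero (hRN : IsRNModule μ sm nrm) {E : ℕ → Set Ω}
    (hE : ∀ n, MeasurableSet (E n)) {z : S} (h : ∀ n, sm (ind μ (E n)) z = 0)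
    (hc : sm (ind μ (⋃ n, E n)ᶜ) z = 0) : z = 0 := by
  refine hRN.nrm_eq_zero z (AEEqFun.ext ?_)
  filter_upwards [ae_all_iff.2 fun n => hRN.ae_nrm_eq_zero_of_sm_ind_eq_zero (hE n) (h n),
    hRN.ae_nrm_eq_zero_of_sm_ind_eq_zero (MeasurableSet.iUnion hE).compl hc,
    AEEqFun.coeFn_zero (μ := μ) (β := ℝ)] with ω h1 h2 h3
  rw [h3, Pi.zero_apply]
  by_cases hω : ω ∈ ⋃ n, E n
  · obtain ⟨n, hn⟩ := mem_iUnion.1 hω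
    exact h1 n hn
  · exact h2 hω

end IsRNModule

def lcomb (sm : L0 μ → S → S) (x y : S) (D : Set Ω) (ξ η : L0 μ) : S :=
  sm (ξ * ind μ D) x + sm (η * ind μ D) y

variable {x y : S} {ξ η : L0 μ}

lemma lcomb_congr {D : Set Ω} (hD : MeasurableSet D) {ξ' η' : L0 μ}
    (hξ : ∀ᵐ ω ∂μ, ω ∈ D → ξ ω = ξ' ω) (hη : ∀ᵐ ω ∂μ, ω ∈ D → η ω = η' ω) :
    lcomb sm x y D ξ η = lcomb sm x y D ξ' η' := by
  rw [lcomb, lcomb, (mul_ind_eq_mul_ind_iff hD).2 hξ, (mul_ind_eq_mul_ind_iff hD).2 hη]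

namespace IsRNModule

lemma sm_ind_lcomb (hRN : IsRNModule μ sm nrm) {G D : Set Ω} (hG : MeasurableSet G)
    (hD : MeasurableSet D) : sm (ind μ G) (lcomb sm x y D ξ η) = lcomb sm x y (G ∩ D) ξ η := by
  rw [lcomb, lcomb, hRN.smul_add, ← hRN.mul_smul, ← hRN.mul_smul, mul_left_comm,
    mul_left_comm (ind μ G), ind_mul_ind hG hD]

lemma lcomb_empty (hRN : IsRNModule μ sm nrm) : lcomb sm x y ∅ ξ η = 0 := by
  have h : ∀ ζ : L0 μ, ζ * ind μ ∅ = 0 := fun ζ =>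
    (mul_ind_eq_zero_iff MeasurableSet.empty).2 (ae_of_all _ fun _ hω => hω.elim)
  rw [lcomb, h, h, hRN.sm_zero_left, hRN.sm_zero_left, add_zero]

lemma lcomb_eq_zero_of_subset (hRN : IsRNModule μ sm nrm) {G D : Set Ω} (hG : MeasurableSet G)
    (hD : MeasurableSet D) (hGD : G ⊆ D) (h : lcomb sm x y D ξ η = 0) :
    lcomb sm x y G ξ η = 0 := by
  rw [← inter_eq_left.2 hGD, ← hRN.sm_ind_lcomb hG hD, h, hRN.sm_zero_right]

lemma ae_eq_zero_iff_of_lcomb_eq_zero (hRN : IsRNModule μ sm nrm) {D : Set Ω}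
    (hD : MeasurableSet D) (hDA : aeSub μ D (Axy nrm x y)) (h : lcomb sm x y D ξ η = 0) :
    ∀ᵐ ω ∂μ, ω ∈ D → (ξ ω = 0 ↔ η ω = 0) := by
  filter_upwards [hRN.ae_abs_mul_nrm_eq h, aeSub_iff.1 hDA, coeFn_mul_ind ξ hD,
    coeFn_mul_ind η hD] with ω hω hA h1 h2 hωD
  obtain ⟨hx, hy⟩ := hA hωD
  rw [h1, h2, indicator_of_mem hωD, indicator_of_mem hωD] at hω
  rw [← abs_eq_zero, ← abs_eq_zero (a := η ω), ← mul_left_inj' hx.ne', zero_mul, hω,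
    mul_eq_zero, or_iff_left hy.ne']

lemma mul_ind_eq_zero_iff_of_lcomb_eq_zero (hRN : IsRNModule μ sm nrm) {D : Set Ω}
    (hD : MeasurableSet D) (hDA : aeSub μ D (Axy nrm x y)) (h : lcomb sm x y D ξ η = 0) :
    ξ * ind μ D = 0 ↔ η * ind μ D = 0 := by
  rw [mul_ind_eq_zero_iff hD, mul_ind_eq_zero_iff hD]
  refine eventually_congr ?_
  filter_upwards [hRN.ae_eq_zero_iff_of_lcomb_eq_zero hD hDA h] with ω hω
  exact forall_congr' hω

end IsRNModule

def IsDependenceSet (sm : L0 μ → S → S) (nrm : S → L0 μ) (x y : S) (F : Set Ω) : Prop :=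
  MeasurableSet F ∧ aeSub μ F (Axy nrm x y) ∧
    ∃ ξ η : L0 μ, aeSub μ F {ω | ξ ω ≠ 0} ∧ aeSub μ F {ω | η ω ≠ 0} ∧ lcomb sm x y F ξ η = 0

lemma IsDependenceSet.mono (hRN : IsRNModule μ sm nrm) {F E : Set Ω}
    (hF : IsDependenceSet sm nrm x y F) (hE : MeasurableSet E) (hEF : E ⊆ F) :
    IsDependenceSet sm nrm x y E := by
  obtain ⟨hFm, hFA, ξ, η, hξ, hη, h⟩ := hF
  have hsub : ∀ B, aeSub μ F B → aeSub μ E B := fun B hFB =>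
    measure_mono_null (sdiff_subset_sdiff_left hEF) hFB
  exact ⟨hE, hsub _ hFA, ξ, η, hsub _ hξ, hsub _ hη, hRN.lcomb_eq_zero_of_subset hE hFm hEF h⟩

lemma IsDependenceSet.measure_eq_zero_of_indep {G D : Set Ω}
    (hG : IsDependenceSet sm nrm x y G) (hD : MeasurableSet D) (hGD : aeSub μ G D)
    (h : Indep sm x y D) : μ G = 0 := by
  obtain ⟨hGm, -, ξ, η, hξ, -, hrel⟩ := hG
  have hGD' : (G ∩ D : Set Ω) =ᵐ[μ] G :=
    ae_eq_set.2 ⟨aeSub_of_subset inter_subset_left, by rwa [sdiff_self_inter]⟩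
  have hind : ∀ ζ : L0 μ, ζ * ind μ G * ind μ D = ζ * ind μ G := fun ζ => by
    rw [mul_assoc, ind_mul_ind hGm hD, ind_congr hGD' (hGm.inter hD) hGm]
  have hzero := (h (ξ * ind μ G) (η * ind μ G) (by rw [hind, hind]; exact hrel)).1
  rw [hind, mul_ind_eq_zero_iff hGm] at hzero
  rw [measure_eq_zero_iff_ae_notMem]
  filter_upwards [hzero, aeSub_iff.1 hξ] with ω h0 hne hω
  exact hne hω (h0 hω)

lemma IsRNModule.isDependenceSet_inter_ne_zero (hRN : IsRNModule μ sm nrm) {D : Set Ω}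
    (hD : MeasurableSet D) (hDA : aeSub μ D (Axy nrm x y)) (h : lcomb sm x y D ξ η = 0) :
    IsDependenceSet sm nrm x y (D ∩ {ω | ξ ω ≠ 0}) := by
  have hG := hD.inter (measurableSet_ne_zero ξ)
  refine ⟨hG, measure_mono_null (sdiff_subset_sdiff_left inter_subset_left) hDA, ξ, η,
    aeSub_of_subset inter_subset_right, aeSub_iff.2 ?_,
    hRN.lcomb_eq_zero_of_subset hG hD inter_subset_left h⟩
  filter_upwards [hRN.ae_eq_zero_iff_of_lcomb_eq_zero hD hDA h] with ω hω hωG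
  exact fun hη => hωG.2 ((hω hωG.1).2 hη)

lemma IsRNModule.exists_isDependenceSet_of_not_indep (hRN : IsRNModule μ sm nrm) {D : Set Ω}
    (hD : MeasurableSet D) (hDA : aeSub μ D (Axy nrm x y)) (h : ¬ Indep sm x y D) :
    ∃ G ⊆ D, IsDependenceSet sm nrm x y G ∧ 0 < μ G := by
  simp only [Indep, not_forall] at h
  obtain ⟨ξ, η, hrel, hne⟩ := h
  have hξ : ξ * ind μ D ≠ 0 := fun h0 =>
    hne ⟨h0, (hRN.mul_ind_eq_zero_iff_of_lcomb_eq_zero hD hDA hrel).1 h0⟩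
  refine ⟨_, inter_subset_left, hRN.isDependenceSet_inter_ne_zero hD hDA hrel, ?_⟩
  rw [Ne, mul_ind_eq_zero_iff hD, ae_iff] at hξ
  simpa [pos_iff_ne_zero, ofPred_and] using hξ

lemma IsRNModule.isDependenceSet_iUnion (hRN : IsRNModule μ sm nrm) {F : ℕ → Set Ω}
    (hF : ∀ n, IsDependenceSet sm nrm x y (F n)) : IsDependenceSet sm nrm x y (⋃ n, F n) := by
  choose hFm hFA ξ η hξ hη hrel using hF
  have hE : ∀ n, MeasurableSet (disjointed F n) := .disjointed hFm
  have hU : MeasurableSet (⋃ n, F n) := .iUnion hFm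
  obtain ⟨ξ', hξ'⟩ := exists_ae_eq_on_of_pairwise_disjoint hE (disjoint_disjointed F) ξ
  obtain ⟨η', hη'⟩ := exists_ae_eq_on_of_pairwise_disjoint hE (disjoint_disjointed F) η
  have glued_ne_zero : ∀ (ζ : L0 μ) (ζs : ℕ → L0 μ),
      (∀ n, ∀ᵐ ω ∂μ, ω ∈ disjointed F n → ζ ω = ζs n ω) →
      (∀ n, aeSub μ (F n) {ω | ζs n ω ≠ 0}) → aeSub μ (⋃ n, F n) {ω | ζ ω ≠ 0} := by
    intro ζ ζs hζ hζs
    rw [← iUnion_disjointed]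
    refine aeSub_iUnion fun n => aeSub_iff.2 ?_
    filter_upwards [hζ n, aeSub_iff.1 (hζs n)] with ω h1 h2 hω
    rw [h1 hω]
    exact h2 (disjointed_subset F n hω)
  refine ⟨hU, aeSub_iUnion hFA, ξ', η', glued_ne_zero ξ' ξ hξ' hξ, glued_ne_zero η' η hη' hη, ?_⟩
  refine hRN.eq_zero_of_sm_ind_eq_zero hE (fun n => ?_) ?_
  · have hsub : disjointed F n ⊆ ⋃ n, F n := (disjointed_subset F n).trans (subset_iUnion F n)
    rw [hRN.sm_ind_lcomb (hE n) hU, inter_eq_left.2 hsub, lcomb_congr (hE n) (hξ' n) (hη' n),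
      hRN.lcomb_eq_zero_of_subset (hE n) (hFm n) (disjointed_subset F n) (hrel n)]
  · rw [iUnion_disjointed, hRN.sm_ind_lcomb hU.compl hU, compl_inter_self, hRN.lcomb_empty]

theorem exists_unique_dependence_part_general {Ω : Type*} [MeasurableSpace Ω] (μ : Measure Ω)
    [IsProbabilityMeasure μ] {S : Type*} [AddCommGroup S]
    (sm : L0 μ → S → S) (nrm : S → L0 μ) (hRN : IsRNModule μ sm nrm)
    (x y : S) (hnot : ¬ Indep sm x y (Axy nrm x y)) :
    ∃ F : Set Ω, SplitProp μ sm nrm x y F ∧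
      ∀ F' : Set Ω, SplitProp μ sm nrm x y F' → aeEqS μ F F' := by
  have hA := measurableSet_Axy (μ := μ) (nrm := nrm) x y
  obtain ⟨G, -, hG, hGpos⟩ :=
    hRN.exists_isDependenceSet_of_not_indep hA (aeSub_of_subset subset_rfl) hnot
  obtain ⟨F, hF, hFmax⟩ := exists_aeSub_greatest_of_iUnion_mem (μ := μ)
    (C := {F | IsDependenceSet sm nrm x y F}) ⟨G, hG⟩ (fun _ h => h.1)
    (fun _ h => hRN.isDependenceSet_iUnion h)
  have hindep : 0 < μ (Axy nrm x y \ F) → Indep sm x y (Axy nrm x y \ F) := by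
    refine fun _ => by_contra fun h => ?_
    obtain ⟨G', hG'sub, hG', hG'pos⟩ :=
      hRN.exists_isDependenceSet_of_not_indep (hA.diff hF.1) (aeSub_of_subset sdiff_subset) h
    have hG'F : G' ⊆ G' \ F := fun ω hω => ⟨hω, (hG'sub hω).2⟩
    exact hG'pos.ne' (measure_mono_null hG'F (hFmax G' hG'))
  refine ⟨F, ⟨hF.1, hF.2.1, hGpos.trans_le (hFmax G hG).measure_le, hF.2.2, hindep⟩,
    fun F' hF' => measure_union_null ?_ (hFmax F' ⟨hF'.1, hF'.2.1, hF'.2.2.2.1⟩)⟩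
  have hFF' : aeSub μ (F \ F') (Axy nrm x y \ F') := aeSub_iff.2 <| by
    filter_upwards [aeSub_iff.1 hF.2.1] with ω h hω
    exact ⟨h hω.1, hω.2⟩
  by_contra hne
  exact hne <| (hF.mono hRN (hF.1.diff hF'.1) sdiff_subset).measure_eq_zero_of_indep
    (hA.diff hF'.1) hFF' (hF'.2.2.2.2 ((pos_iff_ne_zero.2 hne).trans_le hFF'.measure_le))

/-- **Proposition 2.1(1).** If `P(A_{xy}) > 0` and `x, y` are not `L⁰`-independent on
`A_{xy}`, then there is a unique (mod null sets) `F` with the properties above. -/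
theorem exists_unique_dependence_part {Ω : Type*} [MeasurableSpace Ω] (μ : Measure Ω)
    [IsProbabilityMeasure μ] {S : Type*} [AddCommGroup S]
    (sm : L0 μ → S → S) (nrm : S → L0 μ) (hRN : IsRNModule μ sm nrm)
    (x y : S) (hA : 0 < μ (Axy nrm x y)) (hnot : ¬ Indep sm x y (Axy nrm x y)) :
    ∃ F : Set Ω, SplitProp μ sm nrm x y F ∧
      ∀ F' : Set Ω, SplitProp μ sm nrm x y F' → aeEqS μ F F' :=
  exists_unique_dependence_part_general μ sm nrm hRN x y hnot

end RNM
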